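/- arXiv:0805.2917 — 4 statements merged into one kernel-verified Lean document; each statement's English description precedes it below -/
import Mathlib

section
/- Let {V_i}_{i=1}^m be a uniformly weighted projective rank-l (m,l,d)-protocol. Then for every fixed 1 ≤ i ≤ m: Σ_{j≠i} tr(|V_i V_j*|) ≥ l·√( (d/(ml))·(1 − d/(ml)) ). -/
open Matrix BigOperators
open scoped ComplexOrder

noncomputable section

variable {𝕜 : Type*} [RCLike 𝕜]

/-- Sum of the `k` largest entries of a vector `x : Fin n → ℝ`,
as the supremum of the sums over subsets of cardinality `k`. -/
noncomputable def kMaxSum {n : ℕ} (x : Fin n → ℝ) (k : ℕ) : ℝ :=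
  sSup ((fun t : Finset (Fin n) => ∑ i ∈ t, x i) '' {t : Finset (Fin n) | t.card = k})

/-- `x ≺_w y` : submajorization of real vectors. -/
def SubMajVec {n : ℕ} (x y : Fin n → ℝ) : Prop :=
  ∀ k : ℕ, k ≤ n → kMaxSum x k ≤ kMaxSum y k

/-- `A ≺_w B` : submajorization of self-adjoint matrices (via eigenvalues). -/
def SubMajMat {n : ℕ} (A B : Matrix (Fin n) (Fin n) 𝕜) : Prop :=
  ∃ (hA : A.IsHermitian) (hB : B.IsHermitian), SubMajVec hA.eigenvalues hB.eigenvalues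

/-- `A ≺ B` : majorization of self-adjoint matrices. -/
def MajMat {n : ℕ} (A B : Matrix (Fin n) (Fin n) 𝕜) : Prop :=
  SubMajMat A B ∧ A.trace = B.trace

/-- The q-potential `P_q(V) = Σ_{i,j} |V_i V_j*|²` of a reconstruction system. -/
noncomputable def qPotential {m l d : ℕ} (V : Fin m → Matrix (Fin l) (Fin d) 𝕜) :
    Matrix (Fin l) (Fin l) 𝕜 :=
  ∑ i, ∑ j, (V i * (V j)ᴴ)ᴴ * (V i * (V j)ᴴ)

/-- `tr |A|² = tr(AᴴA)`, as a real number. -/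
noncomputable def traceAbsSq {a b : ℕ} (A : Matrix (Fin a) (Fin b) 𝕜) : ℝ :=
  RCLike.re (Aᴴ * A).trace

/-- `tr |A| = tr((AᴴA)^{1/2})`, the sum of the singular values of `A`. -/
noncomputable def traceAbs {a b : ℕ} (A : Matrix (Fin a) (Fin b) 𝕜) : ℝ :=
  ∑ j, Real.sqrt ((Matrix.posSemidef_conjTranspose_mul_self A).1.eigenvalues j)

/-- A unitarily invariant norm on `M_n(𝕜)`. -/
structure UINorm (n : ℕ) (𝕜 : Type*) [RCLike 𝕜] where
  N : Matrix (Fin n) (Fin n) 𝕜 → ℝ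
  nonneg : ∀ A, 0 ≤ N A
  eq_zero : ∀ A, N A = 0 → A = 0
  triangle : ∀ A B, N (A + B) ≤ N A + N B
  smul_eq : ∀ (c : 𝕜) (A), N (c • A) = ‖c‖ * N A
  invariant : ∀ (A : Matrix (Fin n) (Fin n) 𝕜) (U W : Matrix.unitaryGroup (Fin n) 𝕜),
    N ((U : Matrix (Fin n) (Fin n) 𝕜) * A * (W : Matrix (Fin n) (Fin n) 𝕜)) = N A

/-- `X ⊕ 0_t` : padding a square matrix with `t` zero rows and columns. -/
noncomputable def padMat {r : ℕ} (t : ℕ) (X : Matrix (Fin r) (Fin r) 𝕜) :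
    Matrix (Fin (r + t)) (Fin (r + t)) 𝕜 :=
  Matrix.reindex finSumFinEquiv finSumFinEquiv (Matrix.fromBlocks X 0 0 0)

/-- A compatible unitarily invariant norm: a family of unitarily invariant norms,
one in each dimension, unchanged by adjoining zero rows and columns. -/
structure CUIN (𝕜 : Type*) [RCLike 𝕜] where
  N : ∀ n : ℕ, Matrix (Fin n) (Fin n) 𝕜 → ℝ
  nonneg : ∀ n A, 0 ≤ N n A
  eq_zero : ∀ n A, N n A = 0 → A = 0
  triangle : ∀ n A B, N n (A + B) ≤ N n A + N n B
  smul_eq : ∀ n (c : 𝕜) (A), N n (c • A) = ‖c‖ * N n A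
  invariant : ∀ n (A : Matrix (Fin n) (Fin n) 𝕜) (U W : Matrix.unitaryGroup (Fin n) 𝕜),
    N n ((U : Matrix (Fin n) (Fin n) 𝕜) * A * (W : Matrix (Fin n) (Fin n) 𝕜)) = N n A
  compatible : ∀ (r t : ℕ) (X : Matrix (Fin r) (Fin r) 𝕜), N (r + t) (padMat t X) = N r X

namespace CUIN

/-- The associated symmetric gauge function, evaluated on a real vector:
`ψ(x) = ‖diag(x)‖`. -/
noncomputable def psi (Φ : CUIN 𝕜) {n : ℕ} (x : Fin n → ℝ) : ℝ :=
  Φ.N n (Matrix.diagonal fun i => (x i : 𝕜))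

/-- `η_ψ(l) = ψ(e_l)/l = ‖I_l‖/l`. -/
noncomputable def eta (Φ : CUIN 𝕜) (l : ℕ) : ℝ := Φ.N l 1 / l

/-- A compatible u.i.n. is strict if `‖A‖ = tr(A)·η_ψ(l)` for positive semidefinite `A`
forces `A = (tr A / l)·I`. -/
def Strict (Φ : CUIN 𝕜) : Prop :=
  ∀ (l : ℕ) (A : Matrix (Fin l) (Fin l) 𝕜), A.PosSemidef →
    Φ.N l A = RCLike.re A.trace * Φ.eta l → A = (A.trace / (l : 𝕜)) • 1

/-- A 2-strongly strict compatible u.i.n.: strict, and on `M_2` any two self-adjoint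
matrices `A ≺ B` with equal norms are unitarily equivalent. -/
def TwoStronglyStrict (Φ : CUIN 𝕜) : Prop :=
  Φ.Strict ∧ ∀ A B : Matrix (Fin 2) (Fin 2) 𝕜, A.IsHermitian → B.IsHermitian →
    MajMat A B → Φ.N 2 A = Φ.N 2 B →
    ∃ U ∈ Matrix.unitaryGroup (Fin 2) 𝕜, A = star U * B * U

end CUIN

/-- Worst-case reconstruction error for `p` lost packets:
`e_p^ψ(V) = max_{|K| = p} ‖V*V − V*E_K V‖ = max_{|K| = p} ‖Σ_{i ∈ K} Vᵢ*Vᵢ‖`. -/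
noncomputable def errP {m l d : ℕ} (Φ : CUIN 𝕜) (p : ℕ)
    (V : Fin m → Matrix (Fin l) (Fin d) 𝕜) : ℝ :=
  sSup {r : ℝ | ∃ K : Finset (Fin m), K.card = p ∧ r = Φ.N d (∑ i ∈ K, (V i)ᴴ * V i)}

/-- The constant `c_{m,l,d} = √( (d/((m−1)·m·l))·(1 − d/(ml)) )`. -/
noncomputable def cmld (m l d : ℕ) : ℝ :=
  Real.sqrt ((d : ℝ) / (((m : ℝ) - 1) * m * l) * (1 - (d : ℝ) / ((m : ℝ) * l)))

/-- A uniformly weighted projective rank-`l` `(m,l,d)`-protocol: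
`Σᵢ Vᵢ*Vᵢ = I_d` and `VᵢVᵢ* = (d/(ml))·I_l` for every `i`. -/
def IsUWP {m l d : ℕ} (V : Fin m → Matrix (Fin l) (Fin d) 𝕜) : Prop :=
  (∑ i, (V i)ᴴ * V i = 1) ∧ ∀ i, V i * (V i)ᴴ = ((d : 𝕜) / ((m : 𝕜) * (l : 𝕜))) • 1

/-- A uniformly weighted projective rank-`l` `(m,l,d)`-protocol, stated via projections:
`Σᵢ Vᵢ*Vᵢ = I_d` and `Vᵢ*Vᵢ = (d/(ml))·Pᵢ` with `Pᵢ` rank-`l` orthogonal projections. -/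
def IsUWPProj {m l d : ℕ} (V : Fin m → Matrix (Fin l) (Fin d) 𝕜) : Prop :=
  (∑ i, (V i)ᴴ * V i = 1) ∧ ∀ i, ∃ P : Matrix (Fin d) (Fin d) 𝕜,
    Pᴴ = P ∧ P * P = P ∧ P.rank = l ∧ (V i)ᴴ * V i = ((d : 𝕜) / ((m : 𝕜) * (l : 𝕜))) • P

/-- Padding a vector with zeros to length `d`. -/
def padVec {l : ℕ} (d : ℕ) (x : Fin l → ℝ) : Fin d → ℝ :=
  fun j => if h : (j : ℕ) < l then x ⟨j, h⟩ else 0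

end

/-!
Put `c = d/(ml)` and `Aⱼ = Vᵢ Vⱼᴴ`. Since `∑ⱼ Vⱼᴴ Vⱼ = 1`, the `Aⱼ Aⱼᴴ` add up to `Vᵢ Vᵢᴴ = c`,
and removing `j = i` leaves `∑_{j ≠ i} Aⱼ Aⱼᴴ = c(1 - c)`. So each `Aⱼ Aⱼᴴ ≤ c(1 - c)`, every
singular value `σ` of `Aⱼ` satisfies `σ² ≤ √(c(1 - c)) σ`, and summing over `j` and the singular
values gives `l c(1 - c) = ∑_{j ≠ i} tr |Aⱼ|² ≤ √(c(1 - c)) ∑_{j ≠ i} tr |Aⱼ|`.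
-/

section TraceAbs

variable {𝕜 : Type*} [RCLike 𝕜]

lemma traceAbs_nonneg {a b : ℕ} (A : Matrix (Fin a) (Fin b) 𝕜) : 0 ≤ traceAbs A :=
  Finset.sum_nonneg fun _ _ => Real.sqrt_nonneg _

lemma traceAbsSq_eq_sum_eigenvalues {a b : ℕ} (A : Matrix (Fin a) (Fin b) 𝕜) :
    traceAbsSq A = ∑ j, (Matrix.posSemidef_conjTranspose_mul_self A).1.eigenvalues j := by
  rw [traceAbsSq, (Matrix.posSemidef_conjTranspose_mul_self A).1.trace_eq_sum_eigenvalues,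
    ← RCLike.ofReal_sum, RCLike.ofReal_re]

/-- For an eigenvector `v` of `Aᴴ A` with eigenvalue `λ`, `w = A v` satisfies `A Aᴴ w = λ w` and
`‖w‖² = λ`, so `0 ≤ ⟪w, (t - A Aᴴ) w⟫ = λ (t - λ)`. -/
lemma Matrix.eigenvalues_conjTranspose_mul_self_le {m n : Type*} [Fintype m] [Fintype n]
    [DecidableEq m] [DecidableEq n] (A : Matrix m n 𝕜) {t : ℝ} (ht : 0 ≤ t)
    (hA : ((t : 𝕜) • (1 : Matrix m m 𝕜) - A * Aᴴ).PosSemidef) (k : n) :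
    (Matrix.posSemidef_conjTranspose_mul_self A).1.eigenvalues k ≤ t := by
  set hB := Matrix.posSemidef_conjTranspose_mul_self A
  set lam := hB.1.eigenvalues k
  set v : n → 𝕜 := ⇑(hB.1.eigenvectorBasis k)
  have hBv : (Aᴴ * A) *ᵥ v = (lam : 𝕜) • v := by
    rw [← RCLike.real_smul_eq_coe_smul]
    exact hB.1.mulVec_eigenvectorBasis k
  have hvv : star v ⬝ᵥ v = 1 := by
    rw [dotProduct_comm, ← EuclideanSpace.inner_eq_star_dotProduct, inner_self_eq_norm_sq_to_K,
      hB.1.eigenvectorBasis.orthonormal.1 k]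
    simp
  set w := A *ᵥ v
  have hww : star w ⬝ᵥ w = (lam : 𝕜) := by
    rw [Matrix.star_mulVec, ← Matrix.dotProduct_mulVec, Matrix.mulVec_mulVec, hBv,
      dotProduct_smul, hvv, smul_eq_mul, mul_one]
  have hAAw : (A * Aᴴ) *ᵥ w = (lam : 𝕜) • w := by
    rw [Matrix.mulVec_mulVec, Matrix.mul_assoc, ← Matrix.mulVec_mulVec, hBv, Matrix.mulVec_smul]
  have hquad : (0 : 𝕜) ≤ ((lam * (t - lam) : ℝ) : 𝕜) := by
    have := hA.dotProduct_mulVec_nonneg w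
    rw [Matrix.sub_mulVec, dotProduct_sub, Matrix.smul_mulVec, Matrix.one_mulVec, dotProduct_smul,
      hAAw, dotProduct_smul, hww, smul_eq_mul, smul_eq_mul] at this
    convert this using 1
    push_cast
    ring
  rw [← RCLike.ofReal_zero, RCLike.ofReal_le_ofReal] at hquad
  nlinarith [hB.eigenvalues_nonneg k]

lemma traceAbsSq_le_sqrt_mul_traceAbs {a b : ℕ} (A : Matrix (Fin a) (Fin b) 𝕜) {t : ℝ}
    (ht : 0 ≤ t) (hA : ((t : 𝕜) • (1 : Matrix (Fin a) (Fin a) 𝕜) - A * Aᴴ).PosSemidef) :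
    traceAbsSq A ≤ Real.sqrt t * traceAbs A := by
  rw [traceAbsSq_eq_sum_eigenvalues, traceAbs, Finset.mul_sum]
  refine Finset.sum_le_sum fun k _ => ?_
  have hlam := (Matrix.posSemidef_conjTranspose_mul_self A).eigenvalues_nonneg k
  calc _ = Real.sqrt _ * Real.sqrt _ := (Real.mul_self_sqrt hlam).symm
    _ ≤ _ := by
      gcongr
      exact A.eigenvalues_conjTranspose_mul_self_le ht hA k

lemma mul_sqrt_le_sum_traceAbs {ι : Type*} {a b : ℕ} (s : Finset ι)
    (A : ι → Matrix (Fin a) (Fin b) 𝕜) {t : ℝ}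
    (hA : ∑ j ∈ s, A j * (A j)ᴴ = (t : 𝕜) • 1) :
    a * Real.sqrt t ≤ ∑ j ∈ s, traceAbs (A j) := by
  classical
  rcases le_or_gt t 0 with ht | ht
  · rw [Real.sqrt_eq_zero'.2 ht, mul_zero]
    exact Finset.sum_nonneg fun j _ => traceAbs_nonneg (A j)
  have hgap : ∀ j ∈ s, ((t : 𝕜) • (1 : Matrix (Fin a) (Fin a) 𝕜) - A j * (A j)ᴴ).PosSemidef := by
    intro j hj
    rw [← hA, ← Finset.add_sum_erase s _ hj, add_sub_cancel_left]
    exact Matrix.posSemidef_sum _ fun i _ => Matrix.posSemidef_self_mul_conjTranspose (A i)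
  have htrace : ∑ j ∈ s, traceAbsSq (A j) = t * a := by
    simp only [traceAbsSq, Matrix.trace_mul_comm (A _)ᴴ, ← map_sum, ← Matrix.trace_sum, hA,
      Matrix.trace_smul, Matrix.trace_one, Fintype.card_fin, smul_eq_mul]
    simp
  have hsqrt := Real.sqrt_pos.2 ht
  refine le_of_mul_le_mul_left ?_ hsqrt
  calc Real.sqrt t * (a * Real.sqrt t) = t * a := by
        rw [mul_left_comm, Real.mul_self_sqrt ht.le, mul_comm]
    _ = ∑ j ∈ s, traceAbsSq (A j) := htrace.symm
    _ ≤ ∑ j ∈ s, Real.sqrt t * traceAbs (A j) :=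
        Finset.sum_le_sum fun j hj => traceAbsSq_le_sqrt_mul_traceAbs (A j) ht.le (hgap j hj)
    _ = _ := (Finset.mul_sum _ _ _).symm

end TraceAbs

section Protocol

variable {𝕜 : Type*} [RCLike 𝕜] {m l d : ℕ}

lemma sum_erase_mul_conjTranspose_eq_sub (V : Fin m → Matrix (Fin l) (Fin d) 𝕜)
    (hV : ∑ j, (V j)ᴴ * V j = 1) (i : Fin m) :
    ∑ j ∈ Finset.univ.erase i, (V i * (V j)ᴴ) * (V i * (V j)ᴴ)ᴴ =
      V i * (V i)ᴴ - (V i * (V i)ᴴ) * (V i * (V i)ᴴ) := by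
  have hterm : ∀ j, (V i * (V j)ᴴ) * (V i * (V j)ᴴ)ᴴ = V i * ((V j)ᴴ * V j) * (V i)ᴴ := by
    intro j
    simp only [Matrix.conjTranspose_mul, Matrix.conjTranspose_conjTranspose, Matrix.mul_assoc]
  have hall : ∑ j, (V i * (V j)ᴴ) * (V i * (V j)ᴴ)ᴴ = V i * (V i)ᴴ := by
    simp only [hterm, ← Matrix.sum_mul, ← Matrix.mul_sum, hV, Matrix.mul_one]
  calc _ = ∑ j, (V i * (V j)ᴴ) * (V i * (V j)ᴴ)ᴴ - (V i * (V i)ᴴ) * (V i * (V i)ᴴ)ᴴ := by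
        rw [← Finset.add_sum_erase _ _ (Finset.mem_univ i), add_sub_cancel_left]
    _ = _ := by rw [hall, hterm, Matrix.mul_assoc, Matrix.mul_assoc, Matrix.mul_assoc]

lemma IsUWP.sum_erase_mul_conjTranspose_eq {V : Fin m → Matrix (Fin l) (Fin d) 𝕜}
    (hV : IsUWP V) (i : Fin m) :
    ∑ j ∈ Finset.univ.erase i, (V i * (V j)ᴴ) * (V i * (V j)ᴴ)ᴴ =
      ((d / (m * l) * (1 - d / (m * l)) : ℝ) : 𝕜) • 1 := by
  rw [sum_erase_mul_conjTranspose_eq_sub V hV.1, hV.2, smul_mul_smul, Matrix.one_mul, ← sub_smul]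
  congr 1
  push_cast
  ring

end Protocol

theorem stmt11_general {𝕜 : Type*} [RCLike 𝕜] (m l d : ℕ)
    (V : Fin m → Matrix (Fin l) (Fin d) 𝕜) (huwp : IsUWP V) :
    ∀ i : Fin m,
      (l : ℝ) * Real.sqrt ((d : ℝ) / ((m : ℝ) * l) * (1 - (d : ℝ) / ((m : ℝ) * l))) ≤
        ∑ j ∈ Finset.univ.erase i, traceAbs (V i * (V j)ᴴ) := fun i =>
  mul_sqrt_le_sum_traceAbs _ _ (huwp.sum_erase_mul_conjTranspose_eq i)

theorem stmt11 {𝕜 : Type*} [RCLike 𝕜] (m l d : ℕ) (hl : 0 < l) (hld : l < d) (hdm : d < m * l)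
    (V : Fin m → Matrix (Fin l) (Fin d) 𝕜) (huwp : IsUWP V) :
    ∀ i : Fin m,
      (l : ℝ) * Real.sqrt ((d : ℝ) / ((m : ℝ) * l) * (1 - (d : ℝ) / ((m : ℝ) * l))) ≤
        ∑ j ∈ Finset.univ.erase i, traceAbs (V i * (V j)ᴴ) :=
  stmt11_general m l d V huwp
end

section
/- Let {V_i}_{i=1}^m be a uniformly weighted projective rank-l (m,l,d)-protocol with m ≥ 2. Then for every fixed 1 ≤ i ≤ m: max_{j≠i} tr(|V_i V_j*|²) ≥ l·c_{m,l,d}². -/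
open Matrix BigOperators
open scoped ComplexOrder

/-!
For fixed `i`, the Parseval identity `Σⱼ Vⱼ*Vⱼ = I` gives
`Σⱼ tr|Vᵢ Vⱼ*|² = tr(Vᵢ*Vᵢ) = κ l` with `κ = d/(ml)`, while the diagonal term is
`tr|Vᵢ Vᵢ*|² = κ² l`. The remaining `m - 1` terms therefore sum to `l κ (1 - κ)`,
which is exactly `(m - 1) · l c²_{m,l,d}`, so one of them is at least the average.
-/

section TraceAbsSq

variable {𝕜 : Type*} [RCLike 𝕜] {a b n : ℕ}

theorem traceAbsSq_eq_re_trace_mul_conjTranspose (A : Matrix (Fin a) (Fin b) 𝕜) :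
    traceAbsSq A = RCLike.re (A * Aᴴ).trace := by
  rw [traceAbsSq, Matrix.trace_mul_comm]

theorem traceAbsSq_mul_conjTranspose (A : Matrix (Fin a) (Fin n) 𝕜)
    (B : Matrix (Fin b) (Fin n) 𝕜) :
    traceAbsSq (A * Bᴴ) = RCLike.re (Aᴴ * A * (Bᴴ * B)).trace := by
  rw [traceAbsSq, conjTranspose_mul, conjTranspose_conjTranspose, Matrix.mul_assoc,
    Matrix.trace_mul_comm, Matrix.mul_assoc, Matrix.mul_assoc, Matrix.mul_assoc]

theorem re_trace_real_smul_one (c : ℝ) :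
    RCLike.re ((c : 𝕜) • (1 : Matrix (Fin n) (Fin n) 𝕜)).trace = c * n := by
  rw [Matrix.trace_smul, Matrix.trace_one, Fintype.card_fin, smul_eq_mul, RCLike.re_ofReal_mul,
    RCLike.natCast_re]

theorem traceAbsSq_real_smul_one (c : ℝ) :
    traceAbsSq ((c : 𝕜) • (1 : Matrix (Fin n) (Fin n) 𝕜)) = c ^ 2 * n := by
  rw [traceAbsSq, conjTranspose_smul, conjTranspose_one, RCLike.star_def, RCLike.conj_ofReal,
    smul_mul_smul_comm, Matrix.one_mul, ← RCLike.ofReal_mul, re_trace_real_smul_one, sq]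

theorem sum_traceAbsSq_mul_conjTranspose {ι : Type*} [Fintype ι]
    {V : ι → Matrix (Fin b) (Fin n) 𝕜} (hV : ∑ j, (V j)ᴴ * V j = 1)
    (A : Matrix (Fin a) (Fin n) 𝕜) :
    ∑ j, traceAbsSq (A * (V j)ᴴ) = traceAbsSq A := by
  calc ∑ j, traceAbsSq (A * (V j)ᴴ) = RCLike.re (Aᴴ * A * ∑ j, (V j)ᴴ * V j).trace := by
        simp only [traceAbsSq_mul_conjTranspose, Matrix.mul_sum, Matrix.trace_sum, map_sum]
    _ = traceAbsSq A := by rw [hV, Matrix.mul_one, traceAbsSq]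

theorem sum_erase_traceAbsSq_mul_conjTranspose {ι : Type*} [Fintype ι] [DecidableEq ι]
    {V : ι → Matrix (Fin b) (Fin n) 𝕜} (hV : ∑ j, (V j)ᴴ * V j = 1) {i : ι} {κ : ℝ}
    (hi : V i * (V i)ᴴ = (κ : 𝕜) • 1) :
    ∑ j ∈ Finset.univ.erase i, traceAbsSq (V i * (V j)ᴴ) = b * κ * (1 - κ) := by
  have htotal := sum_traceAbsSq_mul_conjTranspose hV (V i)
  rw [← Finset.add_sum_erase _ _ (Finset.mem_univ i), hi, traceAbsSq_real_smul_one,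
    traceAbsSq_eq_re_trace_mul_conjTranspose, hi, re_trace_real_smul_one] at htotal
  linear_combination htotal

end TraceAbsSq

theorem sub_one_mul_mul_cmld_sq {m l d : ℕ} (hm : 1 < m) (hdm : d < m * l) :
    ((m : ℝ) - 1) * (l * cmld m l d ^ 2) = l * (d / (m * l)) * (1 - d / (m * l)) := by
  have hml : (0 : ℝ) < m * l := by exact_mod_cast hdm.trans_le' (Nat.zero_le d)
  have hm1 : (0 : ℝ) < m - 1 := by
    rw [sub_pos]
    exact_mod_cast hm
  have hd : (d : ℝ) / (m * l) ≤ 1 := (div_le_one hml).2 (by exact_mod_cast hdm.le)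
  rw [cmld, Real.sq_sqrt (by rw [mul_assoc]; exact mul_nonneg (by positivity) (by linarith)),
    mul_assoc _ (m : ℝ), div_mul_eq_div_div_swap]
  field_simp

theorem stmt12_general {𝕜 : Type*} [RCLike 𝕜] (m l d : ℕ) (hm : 2 ≤ m)
    (hdm : d < m * l)
    (V : Fin m → Matrix (Fin l) (Fin d) 𝕜) (huwp : IsUWP V) :
    ∀ i : Fin m, ∃ j : Fin m, j ≠ i ∧
      (l : ℝ) * cmld m l d ^ 2 ≤ traceAbsSq (V i * (V j)ᴴ) := by
  intro i
  obtain ⟨hsum, hself⟩ := huwp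
  have hκ : (d : 𝕜) / ((m : 𝕜) * (l : 𝕜)) = (((d : ℝ) / (m * l) : ℝ) : 𝕜) := by push_cast; rfl
  have hrest := sum_erase_traceAbsSq_mul_conjTranspose hsum (hκ ▸ hself i)
  have hconst : ∑ _j ∈ Finset.univ.erase i, (l : ℝ) * cmld m l d ^ 2
      = l * (d / (m * l)) * (1 - d / (m * l)) := by
    rw [Finset.sum_const, Finset.card_erase_of_mem (Finset.mem_univ i), Finset.card_univ,
      Fintype.card_fin, nsmul_eq_mul, Nat.cast_pred (by omega),
      sub_one_mul_mul_cmld_sq (by omega) hdm]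
  have hne : (Finset.univ.erase i).Nonempty := by
    rw [← Finset.card_pos, Finset.card_erase_of_mem (Finset.mem_univ i), Finset.card_univ,
      Fintype.card_fin]
    omega
  obtain ⟨j, hj, hle⟩ := Finset.exists_le_of_sum_le hne (hconst.trans hrest.symm).le
  exact ⟨j, Finset.ne_of_mem_erase hj, hle⟩

theorem stmt12 {𝕜 : Type*} [RCLike 𝕜] (m l d : ℕ) (hm : 2 ≤ m) (hl : 0 < l) (hld : l < d)
    (hdm : d < m * l)
    (V : Fin m → Matrix (Fin l) (Fin d) 𝕜) (huwp : IsUWP V) :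
    ∀ i : Fin m, ∃ j : Fin m, j ≠ i ∧
      (l : ℝ) * cmld m l d ^ 2 ≤ traceAbsSq (V i * (V j)ᴴ) :=
  stmt12_general m l d hm hdm V huwp
end

section
/- Let ‖·‖ be a compatible unitarily invariant norm with associated symmetric gauge function ψ, and let {V_i}_{i=1}^m be a uniformly weighted projective rank-l (m,l,d)-protocol with m ≥ 2. Then max_{i≠j} ‖ |V_i V_j*|² ‖ ≥ (d·η_ψ(l)/(m(m−1)))·(1 − d/(ml)). Moreover, if ‖·‖ is strict, then equality holds if and only if V_i V_j* = c_{m,l,d}·Q_{ij} for some unitary operators Q_{ij} on 𝔽^l, for all 1 ≤ i ≠ j ≤ m. -/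
open Matrix BigOperators
open scoped ComplexOrder

/-!
For positive semidefinite `A ∈ M_l`, the cyclic shifts of `diag(λ(A))` sum to `tr A · I`, so
subadditivity and unitary invariance give `tr A · η_ψ(l) ≤ ‖A‖`. For a u.w.p. protocol with
`c = d/(ml)` one has `Σ_{i ≠ j} |VᵢVⱼ*|² = c(1 - c)·I` for every `j`, so some `i ≠ j` has
`tr |VᵢVⱼ*|² ≥ l·c(1 - c)/(m - 1) = l·c_{m,l,d}²`, which gives the bound. At equality all these
traces equal `l·c_{m,l,d}²` and each norm equals trace times `η_ψ(l)`, so strictness forces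
`|VᵢVⱼ*|² = c_{m,l,d}²·I`, i.e. `VᵢVⱼ* / c_{m,l,d}` is unitary.
-/

namespace Matrix

variable {𝕜 : Type*} [RCLike 𝕜]

lemma ofReal_smul_conjTranspose_mul_ofReal_smul {α β : Type*} [Fintype α] (r : ℝ)
    (X : Matrix α β 𝕜) :
    ((r : 𝕜) • X)ᴴ * ((r : 𝕜) • X) = ((r ^ 2 : ℝ) : 𝕜) • (Xᴴ * X) := by
  rw [conjTranspose_smul, Matrix.smul_mul, Matrix.mul_smul, smul_smul, RCLike.star_def,
    RCLike.conj_ofReal, RCLike.ofReal_pow, sq]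

variable {ι : Type*} [Fintype ι] [DecidableEq ι]

lemma permMatrix_mem_unitaryGroup (σ : Equiv.Perm ι) :
    σ.permMatrix 𝕜 ∈ unitaryGroup ι 𝕜 := by
  rw [mem_unitaryGroup_iff', star_eq_conjTranspose, conjTranspose_permMatrix, ← permMatrix_mul,
    mul_inv_cancel, permMatrix_one]

lemma permMatrix_mul_diagonal_mul_permMatrix_inv (σ : Equiv.Perm ι) (x : ι → 𝕜) :
    σ.permMatrix 𝕜 * diagonal x * σ⁻¹.permMatrix 𝕜 = diagonal (x ∘ σ) := by
  rw [PEquiv.toMatrix_toPEquiv_mul, Equiv.Perm.permMatrix, PEquiv.mul_toMatrix_toPEquiv,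
    Equiv.Perm.inv_def, Equiv.symm_symm, submatrix_submatrix, Function.comp_id, Function.id_comp,
    submatrix_diagonal _ _ σ.injective]

lemma sum_diagonal_comp_addRight {R : Type*} [Semiring R] {n : ℕ} [NeZero n] (x : Fin n → R) :
    ∑ k, diagonal (x ∘ Equiv.addRight k) = (∑ i, x i) • (1 : Matrix (Fin n) (Fin n) R) := by
  ext i j
  rcases eq_or_ne i j with rfl | h
  · simp only [sum_apply, diagonal_apply_eq, Function.comp_apply, Equiv.coe_addRight,
      smul_apply, one_apply_eq, smul_eq_mul, mul_one]
    exact Fintype.sum_equiv (Equiv.addLeft i) _ _ fun k => rfl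
  · simp [sum_apply, h]

lemma IsHermitian.ofReal_re_trace {A : Matrix ι ι 𝕜} (hA : A.IsHermitian) :
    ((RCLike.re A.trace : ℝ) : 𝕜) = A.trace := by
  rw [hA.trace_eq_sum_eigenvalues, ← RCLike.ofReal_sum, RCLike.ofReal_re]

lemma exists_mem_unitaryGroup_ofReal_smul_iff {X : Matrix ι ι 𝕜} {c : ℝ} (hc : c ≠ 0) :
    (∃ Q ∈ unitaryGroup ι 𝕜, X = (c : 𝕜) • Q) ↔ Xᴴ * X = ((c ^ 2 : ℝ) : 𝕜) • 1 := by
  constructor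
  · rintro ⟨Q, hQ, rfl⟩
    rw [ofReal_smul_conjTranspose_mul_ofReal_smul, ← star_eq_conjTranspose,
      mem_unitaryGroup_iff'.mp hQ]
  · intro hX
    refine ⟨((c⁻¹ : ℝ) : 𝕜) • X, ?_, ?_⟩
    · rw [mem_unitaryGroup_iff', star_eq_conjTranspose,
        ofReal_smul_conjTranspose_mul_ofReal_smul, hX, smul_smul, ← RCLike.ofReal_mul, ← mul_pow,
        inv_mul_cancel₀ hc, one_pow, RCLike.ofReal_one, one_smul]
    · rw [smul_smul, ← RCLike.ofReal_mul, mul_inv_cancel₀ hc, RCLike.ofReal_one, one_smul]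

end Matrix

namespace CUIN

variable {𝕜 : Type*} [RCLike 𝕜] (Φ : CUIN 𝕜)

lemma N_zero (n : ℕ) : Φ.N n 0 = 0 := by
  simpa using Φ.smul_eq n 0 0

lemma N_sum_le {n : ℕ} {ι : Type*} (s : Finset ι) (f : ι → Matrix (Fin n) (Fin n) 𝕜) :
    Φ.N n (∑ i ∈ s, f i) ≤ ∑ i ∈ s, Φ.N n (f i) :=
  Finset.le_sum_of_subadditive (Φ.N n) (Φ.N_zero n).le (Φ.triangle n) s f

lemma N_ofReal_smul {n : ℕ} {r : ℝ} (hr : 0 ≤ r) (A : Matrix (Fin n) (Fin n) 𝕜) :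
    Φ.N n ((r : 𝕜) • A) = r * Φ.N n A := by
  rw [Φ.smul_eq, RCLike.norm_ofReal, abs_of_nonneg hr]

lemma N_one_pos {n : ℕ} (hn : 0 < n) : 0 < Φ.N n 1 := by
  refine (Φ.nonneg n 1).lt_of_ne' fun h => ?_
  simpa using congrFun₂ (Φ.eq_zero n 1 h) ⟨0, hn⟩ ⟨0, hn⟩

lemma eta_pos {l : ℕ} (hl : 0 < l) : 0 < Φ.eta l :=
  div_pos (Φ.N_one_pos hl) (Nat.cast_pos.mpr hl)

lemma N_one_eq_mul_eta {l : ℕ} (hl : l ≠ 0) : Φ.N l 1 = l * Φ.eta l := by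
  rw [eta, mul_div_cancel₀ _ (Nat.cast_ne_zero.mpr hl)]

lemma N_diagonal_comp_perm {n : ℕ} (x : Fin n → 𝕜) (σ : Equiv.Perm (Fin n)) :
    Φ.N n (Matrix.diagonal (x ∘ σ)) = Φ.N n (Matrix.diagonal x) := by
  rw [← Matrix.permMatrix_mul_diagonal_mul_permMatrix_inv]
  exact Φ.invariant n _ ⟨_, Matrix.permMatrix_mem_unitaryGroup σ⟩
    ⟨_, Matrix.permMatrix_mem_unitaryGroup σ⁻¹⟩

lemma N_eq_N_diagonal_eigenvalues {n : ℕ} {A : Matrix (Fin n) (Fin n) 𝕜} (hA : A.IsHermitian) :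
    Φ.N n A = Φ.N n (Matrix.diagonal (RCLike.ofReal ∘ hA.eigenvalues)) := by
  conv_lhs => rw [hA.spectral_theorem, Unitary.conjStarAlgAut_apply]
  exact Φ.invariant n _ hA.eigenvectorUnitary (star hA.eigenvectorUnitary)

lemma norm_sum_mul_N_one_le {n : ℕ} (x : Fin n → 𝕜) :
    ‖∑ i, x i‖ * Φ.N n 1 ≤ n * Φ.N n (Matrix.diagonal x) := by
  rcases Nat.eq_zero_or_pos n with rfl | hn
  · simp
  have : NeZero n := ⟨hn.ne'⟩
  calc ‖∑ i, x i‖ * Φ.N n 1 = Φ.N n (∑ k, Matrix.diagonal (x ∘ Equiv.addRight k)) := by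
        rw [Matrix.sum_diagonal_comp_addRight, Φ.smul_eq]
    _ ≤ ∑ k : Fin n, Φ.N n (Matrix.diagonal (x ∘ Equiv.addRight k)) := Φ.N_sum_le _ _
    _ = n * Φ.N n (Matrix.diagonal x) := by
        simp only [Φ.N_diagonal_comp_perm, Finset.sum_const, Finset.card_univ, Fintype.card_fin,
          nsmul_eq_mul]

lemma re_trace_mul_eta_le {l : ℕ} {A : Matrix (Fin l) (Fin l) 𝕜} (hA : A.PosSemidef) :
    RCLike.re A.trace * Φ.eta l ≤ Φ.N l A := by
  rcases Nat.eq_zero_or_pos l with rfl | hl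
  · simp [eta, Φ.nonneg]
  have htr : RCLike.re A.trace = ‖∑ i, (RCLike.ofReal ∘ hA.1.eigenvalues : Fin l → 𝕜) i‖ := by
    simp only [Function.comp_apply]
    rw [hA.1.trace_eq_sum_eigenvalues, ← RCLike.ofReal_sum, RCLike.ofReal_re, RCLike.norm_ofReal,
      abs_of_nonneg (Finset.sum_nonneg fun i _ => hA.eigenvalues_nonneg i)]
  have hl' : (0 : ℝ) < l := Nat.cast_pos.mpr hl
  rw [eta, htr, mul_div_assoc', div_le_iff₀ hl', Φ.N_eq_N_diagonal_eigenvalues hA.1,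
    mul_comm _ (l : ℝ)]
  exact Φ.norm_sum_mul_N_one_le _

lemma Strict.eq_smul_one {Φ : CUIN 𝕜} (hΦ : Φ.Strict) {l : ℕ} {A : Matrix (Fin l) (Fin l) 𝕜}
    (hA : A.PosSemidef) (h : Φ.N l A ≤ RCLike.re A.trace * Φ.eta l) :
    A = ((RCLike.re A.trace / l : ℝ) : 𝕜) • 1 := by
  rw [RCLike.ofReal_div, hA.1.ofReal_re_trace, RCLike.ofReal_natCast]
  exact hΦ l A hA (h.antisymm (Φ.re_trace_mul_eta_le hA))

end CUIN

section OffDiagonal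

variable {ι : Type*} {f : ι → ι → ℝ}

lemma le_sSup_offDiag [Finite ι] {i j : ι} (hij : i ≠ j) :
    f i j ≤ sSup {r : ℝ | ∃ i j : ι, i ≠ j ∧ r = f i j} := by
  refine le_csSup ((Set.finite_range fun p : ι × ι => f p.1 p.2).subset ?_).bddAbove
    ⟨i, j, hij, rfl⟩
  rintro r ⟨i, j, -, rfl⟩
  exact ⟨(i, j), rfl⟩

lemma sSup_offDiag_eq_of_forall [Nontrivial ι] {b : ℝ} (h : ∀ i j, i ≠ j → f i j = b) :
    sSup {r : ℝ | ∃ i j : ι, i ≠ j ∧ r = f i j} = b := by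
  obtain ⟨i, j, hij⟩ := exists_pair_ne ι
  have hS : {r : ℝ | ∃ i j : ι, i ≠ j ∧ r = f i j} = {b} := by
    ext r
    constructor
    · rintro ⟨i, j, hij, rfl⟩
      exact h i j hij
    · rintro rfl
      exact ⟨i, j, hij, (h i j hij).symm⟩
  rw [hS, csSup_singleton]

end OffDiagonal

lemma mul_cmld_sq {m l d : ℕ} (hm : 2 ≤ m) (hdm : d ≤ m * l) :
    ((m : ℝ) - 1) * cmld m l d ^ 2 = d / (m * l) * (1 - d / (m * l)) := by
  have hm' : (1 : ℝ) < m := by exact_mod_cast hm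
  have hc : (d : ℝ) / (m * l) ≤ 1 := div_le_one_of_le₀ (by exact_mod_cast hdm) (by positivity)
  have hm1 : (m : ℝ) - 1 ≠ 0 := by linarith
  rw [cmld, Real.sq_sqrt
    (mul_nonneg (div_nonneg (Nat.cast_nonneg d) (by positivity)) (by linarith))]
  field_simp

lemma cmld_pos {m l d : ℕ} (hm : 2 ≤ m) (hd : 0 < d) (hdm : d < m * l) : 0 < cmld m l d := by
  have hm' : (1 : ℝ) < m := by exact_mod_cast hm
  have hml : (0 : ℝ) < m * l := by exact_mod_cast hd.trans hdm
  have hc : (d : ℝ) / (m * l) < 1 := (div_lt_one hml).mpr (by exact_mod_cast hdm)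
  have hl : (0 : ℝ) < l := pos_of_mul_pos_right hml (by positivity)
  exact Real.sqrt_pos.mpr (mul_pos (div_pos (Nat.cast_pos.mpr hd) (by positivity)) (by linarith))

namespace IsUWP

variable {𝕜 : Type*} [RCLike 𝕜] {m l d : ℕ} {V : Fin m → Matrix (Fin l) (Fin d) 𝕜}

/-- With `c = d/(ml)`, the full sum over `i` is `Vⱼ (Σᵢ Vᵢ*Vᵢ) Vⱼ* = VⱼVⱼ* = c·I`, and the term
`i = j` is `(c·I)² = c²·I`. -/
lemma sum_erase_conjTranspose_mul_self (hV : IsUWP V) (j : Fin m) :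
    ∑ i ∈ Finset.univ.erase j, (V i * (V j)ᴴ)ᴴ * (V i * (V j)ᴴ) =
      ((d / (m * l) * (1 - d / (m * l)) : ℝ) : 𝕜) • 1 := by
  have hc : ((d : 𝕜) / (m * l)) = ((d / (m * l) : ℝ) : 𝕜) := by push_cast; rfl
  have hgram : ∀ i, (V i * (V j)ᴴ)ᴴ * (V i * (V j)ᴴ) = V j * ((V i)ᴴ * V i) * (V j)ᴴ := by
    intro i
    simp only [conjTranspose_mul, conjTranspose_conjTranspose, Matrix.mul_assoc]
  have hsum : ∑ i, (V i * (V j)ᴴ)ᴴ * (V i * (V j)ᴴ) = V j * (V j)ᴴ := by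
    simp only [hgram, ← Matrix.sum_mul, ← Matrix.mul_sum, hV.1, Matrix.mul_one]
  rw [Finset.sum_erase_eq_sub (Finset.mem_univ j), hsum, hV.2 j, hc,
    ofReal_smul_conjTranspose_mul_ofReal_smul, conjTranspose_one, Matrix.mul_one, ← sub_smul,
    ← RCLike.ofReal_sub]
  congr 2
  ring

lemma sum_erase_re_trace (hV : IsUWP V) (hm : 2 ≤ m) (hdm : d ≤ m * l) (j : Fin m) :
    ∑ i ∈ Finset.univ.erase j, RCLike.re ((V i * (V j)ᴴ)ᴴ * (V i * (V j)ᴴ)).trace =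
      ∑ _i ∈ Finset.univ.erase j, (l * cmld m l d ^ 2 : ℝ) := by
  have hm1 : ((m - 1 : ℕ) : ℝ) = m - 1 := by
    rw [Nat.cast_sub (by omega), Nat.cast_one]
  rw [← map_sum, ← trace_sum, hV.sum_erase_conjTranspose_mul_self, trace_smul, trace_one,
    Fintype.card_fin, smul_eq_mul, ← RCLike.ofReal_natCast (K := 𝕜) l, ← RCLike.ofReal_mul,
    RCLike.ofReal_re, Finset.sum_const, Finset.card_erase_of_mem (Finset.mem_univ j),
    Finset.card_univ, Fintype.card_fin, nsmul_eq_mul, hm1, ← mul_cmld_sq hm hdm]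
  ring

lemma conjTranspose_mul_self_eq_of_N_le (hV : IsUWP V) (hm : 2 ≤ m) (hl : 0 < l)
    (hdm : d ≤ m * l) {Φ : CUIN 𝕜} (hΦ : Φ.Strict)
    (hN : ∀ i j, i ≠ j →
      Φ.N l ((V i * (V j)ᴴ)ᴴ * (V i * (V j)ᴴ)) ≤ l * cmld m l d ^ 2 * Φ.eta l)
    {i j : Fin m} (hij : i ≠ j) :
    (V i * (V j)ᴴ)ᴴ * (V i * (V j)ᴴ) = ((cmld m l d ^ 2 : ℝ) : 𝕜) • 1 := by
  have hpsd : ∀ i, ((V i * (V j)ᴴ)ᴴ * (V i * (V j)ᴴ)).PosSemidef := fun i =>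
    posSemidef_conjTranspose_mul_self _
  have htr_le : ∀ i ∈ Finset.univ.erase j,
      RCLike.re ((V i * (V j)ᴴ)ᴴ * (V i * (V j)ᴴ)).trace ≤ l * cmld m l d ^ 2 := fun i hi =>
    le_of_mul_le_mul_right ((Φ.re_trace_mul_eta_le (hpsd i)).trans
      (hN i j (Finset.ne_of_mem_erase hi))) (Φ.eta_pos hl)
  have htr : RCLike.re ((V i * (V j)ᴴ)ᴴ * (V i * (V j)ᴴ)).trace = l * cmld m l d ^ 2 :=
    (Finset.sum_eq_sum_iff_of_le htr_le).mp (hV.sum_erase_re_trace hm hdm j) i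
      (Finset.mem_erase.mpr ⟨hij, Finset.mem_univ i⟩)
  rw [hΦ.eq_smul_one (hpsd i) (htr ▸ hN i j hij), htr,
    mul_div_cancel_left₀ _ (Nat.cast_ne_zero.mpr hl.ne')]

end IsUWP

theorem stmt14 {𝕜 : Type*} [RCLike 𝕜] (m l d : ℕ) (hm : 2 ≤ m) (hl : 0 < l) (hld : l < d)
    (hdm : d < m * l)
    (Φ : CUIN 𝕜) (V : Fin m → Matrix (Fin l) (Fin d) 𝕜) (huwp : IsUWP V) :
    (d : ℝ) * Φ.eta l / ((m : ℝ) * ((m : ℝ) - 1)) * (1 - (d : ℝ) / ((m : ℝ) * l)) ≤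
      sSup {r : ℝ | ∃ i j : Fin m, i ≠ j ∧
        r = Φ.N l ((V i * (V j)ᴴ)ᴴ * (V i * (V j)ᴴ))} ∧
    (Φ.Strict →
      (sSup {r : ℝ | ∃ i j : Fin m, i ≠ j ∧
          r = Φ.N l ((V i * (V j)ᴴ)ᴴ * (V i * (V j)ᴴ))} =
        (d : ℝ) * Φ.eta l / ((m : ℝ) * ((m : ℝ) - 1)) * (1 - (d : ℝ) / ((m : ℝ) * l)) ↔
        ∀ i j : Fin m, i ≠ j → ∃ Q ∈ Matrix.unitaryGroup (Fin l) 𝕜,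
          V i * (V j)ᴴ = (cmld m l d : 𝕜) • Q)) := by
  have hbound : (d : ℝ) * Φ.eta l / ((m : ℝ) * ((m : ℝ) - 1)) * (1 - (d : ℝ) / ((m : ℝ) * l)) =
      l * cmld m l d ^ 2 * Φ.eta l := by
    have hm1 : (m : ℝ) - 1 ≠ 0 := by
      have : (2 : ℝ) ≤ m := by exact_mod_cast hm
      linarith
    rw [← mul_div_cancel_left₀ (cmld m l d ^ 2) hm1, mul_cmld_sq hm hdm.le]
    field_simp
  have hc := (cmld_pos hm (hl.trans hld) hdm).ne'
  have : Nontrivial (Fin m) := Fin.nontrivial_iff_two_le.mpr hm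
  rw [hbound]
  refine ⟨?_, fun hΦ => ⟨fun hsup i j hij => ?_,
    fun hQ => sSup_offDiag_eq_of_forall fun i j hij => ?_⟩⟩
  · obtain ⟨i₀, j, hij₀⟩ := exists_pair_ne (Fin m)
    obtain ⟨i, hi, hle⟩ := Finset.exists_le_of_sum_le
      ⟨i₀, Finset.mem_erase.mpr ⟨hij₀, Finset.mem_univ i₀⟩⟩
      (huwp.sum_erase_re_trace hm hdm.le j).ge
    calc (l : ℝ) * cmld m l d ^ 2 * Φ.eta l
        ≤ RCLike.re ((V i * (V j)ᴴ)ᴴ * (V i * (V j)ᴴ)).trace * Φ.eta l :=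
          mul_le_mul_of_nonneg_right hle (Φ.eta_pos hl).le
      _ ≤ _ := Φ.re_trace_mul_eta_le (posSemidef_conjTranspose_mul_self _)
      _ ≤ _ := by apply le_sSup_offDiag (Finset.ne_of_mem_erase hi)
  · rw [exists_mem_unitaryGroup_ofReal_smul_iff hc]
    exact huwp.conjTranspose_mul_self_eq_of_N_le hm hl hdm.le hΦ
      (fun i j hij => hsup ▸ by apply le_sSup_offDiag hij) hij
  · rw [(exists_mem_unitaryGroup_ofReal_smul_iff hc).mp (hQ i j hij),
      Φ.N_ofReal_smul (sq_nonneg _), Φ.N_one_eq_mul_eta hl.ne']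
    ring
end

section
/- Let λ_i ∈ ℝ_{≥0}^l be vectors arranged in non-increasing order, for 1 ≤ i ≤ m, and let l < d. Then the following are equivalent: (1) there exists an (m,l,d)-protocol {V_i}_{i=1}^m such that λ(V_i*V_i) = (λ_i, 0_{d−l}) for 1 ≤ i ≤ m; (2) there exists an orthogonal projection P ∈ M_{ml}(𝔽), regarded as an m×m block matrix P = (P_{ij})_{i,j=1}^m with blocks P_{ij} ∈ M_l(𝔽), such that tr(P) = d and λ(P_{ii}) = λ_i for 1 ≤ i ≤ m. -/
open Matrix BigOperators
open scoped ComplexOrder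

/-!
Stack the `Vᵢ` into one `ml × d` matrix `W`, so that `W*W = Σ Vᵢ*Vᵢ` and the diagonal blocks
of `P = WW*` are the `VᵢVᵢ*`. Then `W` is an isometry exactly when `P` is an orthogonal
projection of trace `d`; conversely, by the spectral theorem, a projection of trace `d` has
exactly `d` eigenvalues `1` and the others `0`, so it factors as `WW*` with `W*W = I_d`.
Finally `χ(Vᵢ*Vᵢ) = X^(d−l) χ(VᵢVᵢ*)`, so the spectrum of `Vᵢ*Vᵢ` is that of `VᵢVᵢ*` padded
with `d − l` zeros.
-/

theorem exists_perm_comp_eq_iff_map_univ_eq {ι α : Type*} [Fintype ι] [DecidableEq α]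
    (f g : ι → α) :
    (∃ σ : Equiv.Perm ι, ∀ j, f (σ j) = g j) ↔
      Finset.univ.val.map f = Finset.univ.val.map g := by
  constructor
  · rintro ⟨σ, hσ⟩
    rw [← funext hσ, ← Function.comp_def, ← Multiset.map_map, Multiset.map_univ_val_equiv]
  · intro h
    have hfiber : ∀ c, Fintype.card {j // g j = c} = Fintype.card {j // f j = c} := by
      intro c
      have := congrArg (Multiset.count c) h
      simp only [Multiset.count_map] at this
      simp only [Fintype.card_subtype, Finset.card_def, Finset.filter_val, eq_comm (b := c)]
      exact this.symm
    exact ⟨Equiv.ofFiberEquiv fun c => Fintype.equivOfCardEq (hfiber c),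
      Equiv.ofFiberEquiv_map _⟩

theorem map_padVec_univ {l d : ℕ} (hld : l ≤ d) (x : Fin l → ℝ) :
    Finset.univ.val.map (padVec d x) =
      Multiset.replicate (d - l) 0 + Finset.univ.val.map x := by
  obtain ⟨k, rfl⟩ := Nat.exists_eq_add_of_le hld
  simp only [Fin.univ_val_map, List.ofFn_add, ← Multiset.coe_add, add_comm,
    Nat.add_sub_cancel_left]
  congr 2 <;> simp [padVec]

namespace Matrix

open Polynomial in
theorem roots_charpoly_mul_comm_of_le {R m n : Type*} [CommRing R] [IsDomain R]
    [Fintype m] [Fintype n] [DecidableEq m] [DecidableEq n]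
    (A : Matrix m n R) (B : Matrix n m R) (h : Fintype.card m ≤ Fintype.card n) :
    (B * A).charpoly.roots =
      Multiset.replicate (Fintype.card n - Fintype.card m) 0 + (A * B).charpoly.roots := by
  rw [charpoly_mul_comm_of_le B A h, roots_mul ((monic_X_pow _).mul (charpoly_monic _)).ne_zero,
    roots_X_pow, Multiset.nsmul_singleton]

section BlockRows

variable {R : Type*} [NonUnitalNonAssocSemiring R] [Star R]

theorem conjTranspose_mul_self_eq_sum_submatrix {m l n : Type*} [Fintype m] [Fintype l]
    (W : Matrix (m × l) n R) :
    Wᴴ * W = ∑ i, (W.submatrix (Prod.mk i) id)ᴴ * W.submatrix (Prod.mk i) id := by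
  ext b b'
  simp [mul_apply, sum_apply, Fintype.sum_prod_type]

theorem submatrix_mul_conjTranspose_self {l m n : Type*} [Fintype n]
    (W : Matrix m n R) (r : l → m) :
    (W * Wᴴ).submatrix r r = W.submatrix r id * (W.submatrix r id)ᴴ := by
  rw [submatrix_mul _ _ _ _ _ Function.bijective_id, conjTranspose_submatrix]

end BlockRows

section SelectionMatrix

variable {R : Type*} [NonAssocSemiring R] [StarRing R] {ι κ : Type*} [DecidableEq ι]
  {f : κ → ι}

theorem conjTranspose_submatrix_one_mul_submatrix_one [Fintype ι] [DecidableEq κ]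
    (hf : Function.Injective f) :
    ((1 : Matrix ι ι R).submatrix id f)ᴴ * (1 : Matrix ι ι R).submatrix id f = 1 := by
  rw [conjTranspose_submatrix, conjTranspose_one, ← submatrix_mul _ _ _ _ _ Function.bijective_id,
    Matrix.one_mul, submatrix_one _ hf]

theorem submatrix_one_mul_conjTranspose_submatrix_one [Fintype κ] (hf : Function.Injective f) :
    (1 : Matrix ι ι R).submatrix id f * ((1 : Matrix ι ι R).submatrix id f)ᴴ =
      diagonal fun i => if i ∈ Set.range f then 1 else 0 := by
  ext i j
  rw [mul_apply]
  by_cases hi : i ∈ Set.range f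
  · obtain ⟨b, rfl⟩ := hi
    rw [Finset.sum_eq_single b (fun c _ hcb => by simp [one_apply, hf.ne hcb.symm]) (by simp)]
    by_cases hbj : f b = j
    · subst hbj; simp [one_apply]
    · simp [one_apply, hbj, Ne.symm hbj]
  · have hfi : ∀ c, i ≠ f c := fun c h => hi ⟨c, h.symm⟩
    rw [Finset.sum_eq_zero fun c _ => by simp [one_apply, hfi c]]
    simp only [diagonal_apply, if_neg hi, ite_self]

end SelectionMatrix

variable {𝕜 : Type*} [RCLike 𝕜]

theorem IsHermitian.exists_perm_eigenvalues_eq_iff {n : ℕ} {A : Matrix (Fin n) (Fin n) 𝕜}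
    (hA : A.IsHermitian) (x : Fin n → ℝ) :
    (∃ σ : Equiv.Perm (Fin n), ∀ j, hA.eigenvalues (σ j) = x j) ↔
      A.charpoly.roots = Finset.univ.val.map (RCLike.ofReal ∘ x) := by
  rw [exists_perm_comp_eq_iff_map_univ_eq, hA.roots_charpoly_eq_eigenvalues, ← Multiset.map_map,
    ← Multiset.map_map, (Multiset.map_injective RCLike.ofReal_injective).eq_iff]

theorem exists_perm_eigenvalues_conjTranspose_mul_self_iff {l d : ℕ} (hld : l ≤ d)
    (A : Matrix (Fin l) (Fin d) 𝕜) {B : Matrix (Fin l) (Fin l) 𝕜} (hB : B.IsHermitian)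
    (hAB : A * Aᴴ = B) (x : Fin l → ℝ) :
    (∃ σ : Equiv.Perm (Fin d), ∀ j,
        (posSemidef_conjTranspose_mul_self A).1.eigenvalues (σ j) = padVec d x j) ↔
      ∃ σ : Equiv.Perm (Fin l), ∀ j, hB.eigenvalues (σ j) = x j := by
  subst hAB
  rw [IsHermitian.exists_perm_eigenvalues_eq_iff, IsHermitian.exists_perm_eigenvalues_eq_iff,
    roots_charpoly_mul_comm_of_le A Aᴴ (by simpa using hld), ← Multiset.map_map,
    map_padVec_univ hld, Multiset.map_add, Multiset.map_replicate, Multiset.map_map,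
    Fintype.card_fin, Fintype.card_fin, RCLike.ofReal_zero, add_right_inj]

variable {ι : Type*} [Fintype ι] [DecidableEq ι]

theorem IsHermitian.eigenvalues_eq_zero_or_one {P : Matrix ι ι 𝕜} (hP : P.IsHermitian)
    (hPP : P * P = P) (i : ι) :
    hP.eigenvalues i = 0 ∨ hP.eigenvalues i = 1 := by
  have : hP.eigenvalues i ∈ spectrum ℝ P := by
    rw [hP.spectrum_real_eq_range_eigenvalues]; exact ⟨i, rfl⟩
  simpa using IsIdempotentElem.spectrum_subset ℝ hPP this

theorem IsHermitian.exists_mul_conjTranspose_eq_of_mul_self_eq {P : Matrix ι ι 𝕜}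
    (hP : P.IsHermitian) (hPP : P * P = P) {d : ℕ} (htr : P.trace = d) :
    ∃ W : Matrix ι (Fin d) 𝕜, Wᴴ * W = 1 ∧ W * Wᴴ = P := by
  set S := Finset.univ.filter fun i => hP.eigenvalues i = 1
  have heig : ∀ i, (hP.eigenvalues i : 𝕜) = if i ∈ S then 1 else 0 := fun i => by
    rcases hP.eigenvalues_eq_zero_or_one hPP i with h | h <;> simp [S, h]
  have hcard : S.card = d := by
    have : (S.card : 𝕜) = d := by
      rw [← htr, hP.trace_eq_sum_eigenvalues]
      simp [heig]
    exact_mod_cast this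
  set e := (S.equivFinOfCardEq hcard).symm
  set f : Fin d → ι := fun b => e b
  have hf : Function.Injective f := Subtype.val_injective.comp e.injective
  have hrange : ∀ i, i ∈ Set.range f ↔ i ∈ S := fun i =>
    ⟨by rintro ⟨b, rfl⟩; exact (e b).2, fun hi => ⟨e.symm ⟨i, hi⟩, by simp [f]⟩⟩
  set U : Matrix ι ι 𝕜 := (hP.eigenvectorUnitary : Matrix ι ι 𝕜)
  have hU : Uᴴ * U = 1 := mem_unitaryGroup_iff'.mp hP.eigenvectorUnitary.2
  -- `U * E` is the matrix of the eigenvectors of `P` with eigenvalue `1`.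
  set E := (1 : Matrix ι ι 𝕜).submatrix id f
  refine ⟨U * E, ?_, ?_⟩
  · rw [conjTranspose_mul, Matrix.mul_assoc, ← Matrix.mul_assoc Uᴴ, hU, Matrix.one_mul,
      conjTranspose_submatrix_one_mul_submatrix_one hf]
  · conv_rhs => rw [hP.spectral_theorem, Unitary.conjStarAlgAut_apply]
    rw [conjTranspose_mul, Matrix.mul_assoc, ← Matrix.mul_assoc E,
      submatrix_one_mul_conjTranspose_submatrix_one hf, ← Matrix.mul_assoc, star_eq_conjTranspose]
    congr 3
    ext i
    simp [heig, hrange]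

end Matrix

theorem stmt18_general {𝕜 : Type*} [RCLike 𝕜] (m l d : ℕ) (hld : l < d)
    (lam : Fin m → Fin l → ℝ) :
    (∃ V : Fin m → Matrix (Fin l) (Fin d) 𝕜,
        (∑ i, (V i)ᴴ * V i = 1) ∧
        ∀ i, ∃ σ : Equiv.Perm (Fin d), ∀ j,
          (Matrix.posSemidef_conjTranspose_mul_self (V i)).1.eigenvalues (σ j) =
            padVec d (lam i) j) ↔
    (∃ P : Matrix (Fin m × Fin l) (Fin m × Fin l) 𝕜,
        Pᴴ = P ∧ P * P = P ∧ P.trace = (d : 𝕜) ∧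
        ∀ i, ∃ (h : (Matrix.of fun a b => P (i, a) (i, b) :
              Matrix (Fin l) (Fin l) 𝕜).IsHermitian)
            (σ : Equiv.Perm (Fin l)), ∀ j, h.eigenvalues (σ j) = lam i j) := by
  constructor
  · rintro ⟨V, hV, hspec⟩
    set W : Matrix (Fin m × Fin l) (Fin d) 𝕜 := of fun x b => V x.1 x.2 b
    have hW : Wᴴ * W = 1 := (conjTranspose_mul_self_eq_sum_submatrix W).trans hV
    refine ⟨W * Wᴴ, (isHermitian_mul_conjTranspose_self W).eq, ?_, ?_, fun i => ?_⟩
    · rw [Matrix.mul_assoc, ← Matrix.mul_assoc Wᴴ, hW, Matrix.one_mul]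
    · rw [trace_mul_comm, hW, trace_one, Fintype.card_fin]
    · have h := (isHermitian_mul_conjTranspose_self W).submatrix (Prod.mk i)
      exact ⟨h, (exists_perm_eigenvalues_conjTranspose_mul_self_iff hld.le (V i) h
        (submatrix_mul_conjTranspose_self W (Prod.mk i)).symm (lam i)).mp (hspec i)⟩
  · rintro ⟨P, hPh, hPP, htr, hblock⟩
    obtain ⟨W, hW, rfl⟩ := IsHermitian.exists_mul_conjTranspose_eq_of_mul_self_eq hPh hPP htr
    refine ⟨fun i => W.submatrix (Prod.mk i) id,
      (conjTranspose_mul_self_eq_sum_submatrix W).symm.trans hW, fun i => ?_⟩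
    obtain ⟨h, hσ⟩ := hblock i
    exact (exists_perm_eigenvalues_conjTranspose_mul_self_iff hld.le _ h
      (submatrix_mul_conjTranspose_self W (Prod.mk i)).symm (lam i)).mpr hσ

theorem stmt18 {𝕜 : Type*} [RCLike 𝕜] (m l d : ℕ) (hld : l < d)
    (lam : Fin m → Fin l → ℝ) (hnn : ∀ i j, 0 ≤ lam i j) (hdec : ∀ i, Antitone (lam i)) :
    (∃ V : Fin m → Matrix (Fin l) (Fin d) 𝕜,
        (∑ i, (V i)ᴴ * V i = 1) ∧
        ∀ i, ∃ σ : Equiv.Perm (Fin d), ∀ j,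
          (Matrix.posSemidef_conjTranspose_mul_self (V i)).1.eigenvalues (σ j) =
            padVec d (lam i) j) ↔
    (∃ P : Matrix (Fin m × Fin l) (Fin m × Fin l) 𝕜,
        Pᴴ = P ∧ P * P = P ∧ P.trace = (d : 𝕜) ∧
        ∀ i, ∃ (h : (Matrix.of fun a b => P (i, a) (i, b) :
              Matrix (Fin l) (Fin l) 𝕜).IsHermitian)
            (σ : Equiv.Perm (Fin l)), ∀ j, h.eigenvalues (σ j) = lam i j) :=
  stmt18_general m l d hld lam
end
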